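/- arXiv:2012.08778 — 5 statements merged into one kernel-verified Lean document; each statement's English description precedes it below -/
import Mathlib

section
/- For every d ≥ 1 and every natural number k, the integral over the unit sphere S^d of (x₁² + x₂²)^k with respect to the surface measure σ equals 2 π^{(d+1)/2} k! / Γ(k + (d+1)/2). Equivalently, the function φ_k(x) = c_k (x₁ + i x₂)^k with c_k = (Γ(k+(d+1)/2) / (2 π^{(d+1)/2} k!))^{1/2} has L²(S^d, σ)-norm equal to 1. -/
/-!
Integrate `(x₁² + x₂²)^k e^{-‖x‖²}` over `ℝ^{d+1}` in two ways. In generalized polar coordinates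
the integrand is a function homogeneous of degree `2k` times a radial one, so the integral is the
spherical integral times `∫₀^∞ r^{d+2k} e^{-r²} dr = Γ(k + (d+1)/2) / 2`. By Fubini it is instead
the planar integral `∫_{ℝ²} |p|^{2k} e^{-|p|²} dp = π k!` (planar polar coordinates) times the
Gaussian integral `π^{(d-1)/2}` over the remaining coordinates.
-/

open MeasureTheory Real Set Metric
open scoped Nat

namespace MeasureTheory

theorem integral_volumeIoiPow (n : ℕ) (g : ℝ → ℝ) :
    ∫ r : Ioi (0 : ℝ), g r ∂Measure.volumeIoiPow n = ∫ r in Ioi (0 : ℝ), r ^ n * g r := by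
  rw [Measure.volumeIoiPow, integral_withDensity_eq_integral_toReal_smul
    (measurable_subtype_coe.pow_const n).ennreal_ofReal (.of_forall fun _ => ENNReal.ofReal_lt_top),
    ← integral_subtype_comap measurableSet_Ioi fun r : ℝ => r ^ n * g r]
  refine integral_congr_ae (.of_forall fun r => ?_)
  simp only [ENNReal.toReal_ofReal (pow_nonneg r.2.out.le n), smul_eq_mul]

variable {E : Type*} [NormedAddCommGroup E] [NormedSpace ℝ E] [Nontrivial E]
  [FiniteDimensional ℝ E] [MeasurableSpace E] [BorelSpace E]

theorem integral_mul_fun_norm_of_homogeneous (μ : Measure E) [μ.IsAddHaarMeasure] {f : E → ℝ}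
    {m : ℕ} (hf : ∀ (r : ℝ) (x : E), 0 < r → f (r • x) = r ^ m * f x) (g : ℝ → ℝ) :
    ∫ x, f x * g ‖x‖ ∂μ = (∫ ω, f ω ∂μ.toSphere) *
      ∫ r in Ioi (0 : ℝ), r ^ (Module.finrank ℝ E - 1 + m) * g r := by
  calc ∫ x, f x * g ‖x‖ ∂μ = ∫ x : ({0}ᶜ : Set E), f x * g ‖(x : E)‖ ∂μ.comap Subtype.val := by
        rw [integral_subtype_comap (measurableSet_singleton _).compl fun x => f x * g ‖x‖,
          restrict_compl_singleton]
    _ = ∫ p : sphere (0 : E) 1 × Ioi (0 : ℝ), f p.1 * (p.2 ^ m * g p.2)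
          ∂μ.toSphere.prod (Measure.volumeIoiPow (Module.finrank ℝ E - 1)) := by
        rw [← μ.measurePreserving_homeomorphUnitSphereProd.integral_comp
          (Homeomorph.measurableEmbedding _)]
        refine integral_congr_ae (.of_forall fun x => ?_)
        have hx : ‖(x : E)‖ ≠ 0 := norm_ne_zero_iff.2 x.2
        have := hf ‖(x : E)‖ (‖(x : E)‖⁻¹ • x) (norm_pos_iff.2 x.2)
        rw [smul_inv_smul₀ hx] at this
        simp only [homeomorphUnitSphereProd_apply_fst_coe, homeomorphUnitSphereProd_apply_snd_coe,
          this]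
        ring
    _ = _ := by
        rw [integral_prod_mul (fun ω : sphere (0 : E) 1 => f ω)
          (fun r : Ioi (0 : ℝ) => (r : ℝ) ^ m * g r),
          integral_volumeIoiPow _ fun r => r ^ m * g r]
        simp only [pow_add, mul_assoc]

end MeasureTheory

theorem integral_Ioi_pow_mul_exp_neg_sq (n : ℕ) :
    ∫ r in Ioi (0 : ℝ), r ^ n * exp (-r ^ 2) = Gamma ((n + 1) / 2) / 2 := by
  have := integral_rpow_mul_exp_neg_rpow two_pos (q := n) (by linarith [n.cast_nonneg (α := ℝ)])
  simp only [rpow_natCast, rpow_two] at this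
  rw [this]
  ring

theorem integral_sq_add_sq_pow_mul_exp_neg (k : ℕ) :
    ∫ p : ℝ × ℝ, (p.1 ^ 2 + p.2 ^ 2) ^ k * exp (-(p.1 ^ 2 + p.2 ^ 2)) = π * k ! := by
  rw [← integral_comp_polarCoord_symm, polarCoord_target]
  have hpolar : ∀ p : ℝ × ℝ, p.1 • (((polarCoord.symm p).1 ^ 2 + (polarCoord.symm p).2 ^ 2) ^ k
      * exp (-((polarCoord.symm p).1 ^ 2 + (polarCoord.symm p).2 ^ 2)))
      = p.1 ^ (2 * k + 1) * exp (-p.1 ^ 2) * 1 := by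
    intro p
    have h : (p.1 * cos p.2) ^ 2 + (p.1 * sin p.2) ^ 2 = p.1 ^ 2 := by
      linear_combination p.1 ^ 2 * sin_sq_add_cos_sq p.2
    simp only [polarCoord_symm_apply, h, smul_eq_mul]
    ring
  simp_rw [hpolar]
  rw [Measure.volume_eq_prod, setIntegral_prod_mul (fun r : ℝ => r ^ (2 * k + 1) * exp (-r ^ 2))
    (fun _ : ℝ => (1 : ℝ)), integral_Ioi_pow_mul_exp_neg_sq,
    show ((2 * k + 1 : ℕ) + 1 : ℝ) / 2 = k + 1 by push_cast; ring, Gamma_nat_eq_factorial]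
  simp [pi_pos.le]
  ring

theorem integral_exp_neg_sum_sq (ι : Type*) [Fintype ι] :
    ∫ z : ι → ℝ, exp (-∑ i, z i ^ 2) = √π ^ Fintype.card ι := by
  simp_rw [← Finset.sum_neg_distrib, exp_sum]
  rw [integral_fintype_prod_volume_eq_prod (fun _ t => exp (-t ^ 2))]
  have h := integral_gaussian 1
  simp only [neg_mul, one_mul, div_one] at h
  simp [h]

theorem integral_fin_add_two_eq_mul (e : ℕ) (f : ℝ × ℝ → ℝ) (g : (Fin e → ℝ) → ℝ) :
    ∫ y : Fin (e + 2) → ℝ, f (y 0, y 1) * g (fun j => y j.succ.succ)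
      = (∫ p, f p) * ∫ z, g z := by
  let Φ : (Fin (e + 2) → ℝ) ≃ᵐ (ℝ × ℝ) × (Fin e → ℝ) :=
    (MeasurableEquiv.piFinSuccAbove (fun _ => ℝ) 0).trans <|
      ((MeasurableEquiv.refl ℝ).prodCongr (MeasurableEquiv.piFinSuccAbove (fun _ => ℝ) 0)).trans
        MeasurableEquiv.prodAssoc.symm
  have hΦ : MeasurePreserving Φ := by
    refine (measurePreserving_prodAssoc volume volume volume).symm _ |>.comp ?_
    exact ((MeasurePreserving.id volume).prod (volume_preserving_piFinSuccAbove _ 0)).comp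
      (volume_preserving_piFinSuccAbove _ 0)
  rw [← integral_prod_mul, ← Measure.volume_eq_prod, ← hΦ.integral_comp']
  rfl

theorem integral_sq_add_sq_pow_mul_exp_neg_norm_sq (e k : ℕ) :
    ∫ x : EuclideanSpace ℝ (Fin (e + 2)), (x 0 ^ 2 + x 1 ^ 2) ^ k * exp (-‖x‖ ^ 2)
      = √π ^ e * (π * k !) := by
  have hsplit : ∀ y : Fin (e + 2) → ℝ,
      (y 0 ^ 2 + y 1 ^ 2) ^ k * exp (-‖WithLp.toLp 2 y‖ ^ 2)
        = (fun p : ℝ × ℝ => (p.1 ^ 2 + p.2 ^ 2) ^ k * exp (-(p.1 ^ 2 + p.2 ^ 2))) (y 0, y 1)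
          * (fun z : Fin e → ℝ => exp (-∑ j, z j ^ 2)) (fun j => y j.succ.succ) := by
    intro y
    rw [EuclideanSpace.real_norm_sq_eq, Fin.sum_univ_succ, Fin.sum_univ_succ]
    simp only [Fin.succ_zero_eq_one, neg_add, exp_add]
    ring
  rw [← (EuclideanSpace.volume_preserving_symm_measurableEquiv_toLp _).symm.integral_comp']
  simp only [MeasurableEquiv.symm_symm, MeasurableEquiv.coe_toLp]
  rw [integral_congr_ae (.of_forall hsplit), integral_fin_add_two_eq_mul e
      (fun p => (p.1 ^ 2 + p.2 ^ 2) ^ k * exp (-(p.1 ^ 2 + p.2 ^ 2)))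
      (fun z => exp (-∑ j, z j ^ 2)),
    integral_sq_add_sq_pow_mul_exp_neg, integral_exp_neg_sum_sq, Fintype.card_fin]
  ring

theorem sqrt_pi_pow_mul_pi (e : ℕ) : √π ^ e * π = π ^ (((e : ℝ) + 2) / 2) := by
  rw [sqrt_eq_rpow, ← rpow_natCast, ← rpow_mul pi_pos.le, ← rpow_add_one pi_pos.ne']
  congr 1
  ring

theorem integral_sphere_sq_add_sq_pow (e k : ℕ) :
    ∫ ω : sphere (0 : EuclideanSpace ℝ (Fin (e + 2))) 1,
        ((ω : EuclideanSpace ℝ (Fin (e + 2))) 0 ^ 2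
          + (ω : EuclideanSpace ℝ (Fin (e + 2))) 1 ^ 2) ^ k
        ∂(volume : Measure (EuclideanSpace ℝ (Fin (e + 2)))).toSphere
      = 2 * π ^ (((e : ℝ) + 2) / 2) * k ! / Gamma (k + ((e : ℝ) + 2) / 2) := by
  have hhom : ∀ (r : ℝ) (x : EuclideanSpace ℝ (Fin (e + 2))), 0 < r →
      ((r • x) 0 ^ 2 + (r • x) 1 ^ 2) ^ k = r ^ (2 * k) * (x 0 ^ 2 + x 1 ^ 2) ^ k := by
    intro r x _
    simp only [PiLp.smul_apply, smul_eq_mul, pow_mul, ← mul_pow]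
    ring
  have h := integral_mul_fun_norm_of_homogeneous volume
    (f := fun x : EuclideanSpace ℝ (Fin (e + 2)) => (x 0 ^ 2 + x 1 ^ 2) ^ k) hhom
    fun r => exp (-r ^ 2)
  rw [integral_sq_add_sq_pow_mul_exp_neg_norm_sq, finrank_euclideanSpace_fin,
    integral_Ioi_pow_mul_exp_neg_sq,
    show ((e + 2 - 1 + 2 * k : ℕ) + 1 : ℝ) / 2 = k + ((e : ℝ) + 2) / 2 by
      rw [show e + 2 - 1 = e + 1 from rfl]; push_cast; ring] at h
  have hΓ : 0 < Gamma (k + ((e : ℝ) + 2) / 2) := Gamma_pos_of_pos (by positivity)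
  rw [eq_div_iff hΓ.ne', ← sqrt_pi_pow_mul_pi]
  linear_combination -2 * h

theorem norm_ofReal_mul_add_I_mul_pow_sq (c a b : ℝ) (k : ℕ) :
    ‖(c : ℂ) * ((a : ℂ) + Complex.I * b) ^ k‖ ^ 2 = c ^ 2 * (a ^ 2 + b ^ 2) ^ k := by
  rw [mul_comm Complex.I, norm_mul, norm_pow, Complex.norm_add_mul_I, Complex.norm_real,
    Real.norm_eq_abs, mul_pow, ← pow_mul, mul_comm k, pow_mul, sq_sqrt (by positivity), sq_abs]

/-- For every `d ≥ 1` and every natural number `k`, the integral over the unit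
sphere `S^d ⊆ ℝ^{d+1}` of `(x₁² + x₂²)^k` with respect to the canonical surface measure `σ`
(the measure `volume.toSphere` obtained from the Lebesgue measure by the polar-coordinates
decomposition) equals `2 π^{(d+1)/2} k! / Γ(k + (d+1)/2)`.  Equivalently, the function
`φ_k(x) = c_k (x₁ + i x₂)^k` with `c_k = (Γ(k+(d+1)/2)/(2 π^{(d+1)/2} k!))^{1/2}` has
`L²(S^d, σ)`-norm equal to `1`. -/
theorem stmt_2 (d k : ℕ) (hd : 1 ≤ d) :
    (∫ x : Metric.sphere (0 : EuclideanSpace ℝ (Fin (d + 1))) 1,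
        ((x : EuclideanSpace ℝ (Fin (d + 1))) 0 ^ 2
          + (x : EuclideanSpace ℝ (Fin (d + 1))) 1 ^ 2) ^ k
        ∂(volume : Measure (EuclideanSpace ℝ (Fin (d + 1)))).toSphere)
      = 2 * Real.pi ^ (((d : ℝ) + 1) / 2) * (k.factorial : ℝ)
          / Real.Gamma ((k : ℝ) + ((d : ℝ) + 1) / 2)
    ∧ (∫ x : Metric.sphere (0 : EuclideanSpace ℝ (Fin (d + 1))) 1,
        ‖(Real.sqrt (Real.Gamma ((k : ℝ) + ((d : ℝ) + 1) / 2)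
              / (2 * Real.pi ^ (((d : ℝ) + 1) / 2) * (k.factorial : ℝ))) : ℂ)
            * (((x : EuclideanSpace ℝ (Fin (d + 1))) 0 : ℂ)
                + Complex.I * ((x : EuclideanSpace ℝ (Fin (d + 1))) 1 : ℂ)) ^ k‖ ^ 2
        ∂(volume : Measure (EuclideanSpace ℝ (Fin (d + 1)))).toSphere)
      = 1 := by
  obtain ⟨e, rfl⟩ : ∃ e, d = e + 1 := ⟨d - 1, by omega⟩
  have hcast : (((e + 1 : ℕ) : ℝ) + 1) / 2 = ((e : ℝ) + 2) / 2 := by push_cast; ring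
  rw [hcast]
  have hsphere := integral_sphere_sq_add_sq_pow e k
  refine ⟨hsphere, ?_⟩
  simp only [norm_ofReal_mul_add_I_mul_pow_sq]
  rw [integral_const_mul, hsphere, sq_sqrt (by positivity)]
  field_simp
end

section
/- Let d ≥ 2 and let ω ⊆ S^d be a measurable set whose closure is disjoint from the equator {x ∈ S^d : x₃ = x₄ = ⋯ = x_{d+1} = 0}. Then the ratio (∫_ω (x₁² + x₂²)^k dσ) / (∫_{S^d} (x₁² + x₂²)^k dσ) tends to 0 as k → ∞. Equivalently, for the L²-normalized spherical harmonics φ_k(x) = c_k (x₁ + i x₂)^k one has lim_{k→∞} ∫_ω |φ_k|² dσ = 0, so the densities |φ_k|² concentrate on the equator. -/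
/-!
On the sphere, `f = x₁² + x₂²` is at most `1` and equals `1` exactly on the great circle
`x₃ = ⋯ = x_{d+1} = 0`. Since `closure ω` is compact and misses that circle, `f ≤ a < 1` on `ω`,
so `∫_ω f^k ≤ a^k σ(S^d)`, while near the north pole `f > b` for some `b ∈ (a, 1)`, so
`∫ f^k ≥ b^k σ{f ≥ b}` with `σ{f ≥ b} > 0`. The ratio is thus `O((a/b)^k)`. For the harmonics,
`c_k² = Γ(k + (d+1)/2) / (2π^{(d+1)/2} k!)` grows only polynomially in `k`, which the geometric
decay `a^k` beats.
-/

open MeasureTheory Filter Topology Set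

section PowerConcentration

variable {X : Type*} [MeasurableSpace X] {μ : Measure X} {f : X → ℝ}
  {ω : Set X} {a : ℝ}

lemma Continuous.integrable_pow [TopologicalSpace X] [CompactSpace X] [OpensMeasurableSpace X]
    [IsFiniteMeasure μ] (hf : Continuous f) (k : ℕ) : Integrable (fun x ↦ f x ^ k) μ :=
  (hf.pow k).integrable_of_hasCompactSupport (HasCompactSupport.of_compactSpace _)

lemma setIntegral_pow_le_pow_mul_measureReal [IsFiniteMeasure μ] (hf0 : 0 ≤ f)
    (ha : ∀ x ∈ ω, f x ≤ a) (k : ℕ) :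
    ∫ x in ω, f x ^ k ∂μ ≤ a ^ k * μ.real ω := by
  refine (Real.le_norm_self _).trans <|
    norm_setIntegral_le_of_norm_le_const (measure_lt_top μ ω) fun x hx ↦ ?_
  rw [Real.norm_eq_abs, abs_of_nonneg (pow_nonneg (hf0 x) k)]
  exact pow_le_pow_left₀ (hf0 x) (ha x hx) k

theorem tendsto_setIntegral_pow_div_integral_pow [TopologicalSpace X] [CompactSpace X]
    [OpensMeasurableSpace X] [IsFiniteMeasure μ] [μ.IsOpenPosMeasure] (hf : Continuous f)
    (hf0 : 0 ≤ f) (ha0 : 0 ≤ a) (ha : ∀ x ∈ ω, f x ≤ a) {x₀ : X} (hx₀ : a < f x₀) :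
    Tendsto (fun k : ℕ ↦ (∫ x in ω, f x ^ k ∂μ) / ∫ x, f x ^ k ∂μ) atTop (𝓝 0) := by
  obtain ⟨b, hab, hbx₀⟩ := exists_between hx₀
  have hb : 0 < b := ha0.trans_lt hab
  set c := μ.real {x | b ≤ f x}
  have hc : 0 < c := by
    have hU : 0 < μ {x | b < f x} := (isOpen_lt continuous_const hf).measure_pos μ ⟨x₀, hbx₀⟩
    exact ENNReal.toReal_pos (hU.trans_le (measure_mono fun x (hx : b < f x) ↦ hx.le)).ne'
      (measure_ne_top μ _)
  have hlower : ∀ k : ℕ, b ^ k * c ≤ ∫ x, f x ^ k ∂μ := fun k ↦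
    calc b ^ k * c ≤ b ^ k * μ.real {x | b ^ k ≤ f x ^ k} := by
          gcongr
          exact measureReal_mono fun x (hx : b ≤ f x) ↦ pow_le_pow_left₀ hb.le hx k
      _ ≤ ∫ x, f x ^ k ∂μ := mul_meas_ge_le_integral_of_nonneg
          (Eventually.of_forall fun x ↦ pow_nonneg (hf0 x) k) (hf.integrable_pow k) _
  have hgeom : Tendsto (fun k : ℕ ↦ μ.real ω / c * (a / b) ^ k) atTop (𝓝 0) := by
    simpa using (tendsto_pow_atTop_nhds_zero_of_lt_one (div_nonneg ha0 hb.le)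
      ((div_lt_one hb).mpr hab)).const_mul (μ.real ω / c)
  refine squeeze_zero (fun k ↦ div_nonneg ?_ ?_) (fun k ↦ ?_) hgeom
  · exact integral_nonneg fun x ↦ pow_nonneg (hf0 x) k
  · exact (by positivity : 0 ≤ b ^ k * c).trans (hlower k)
  calc (∫ x in ω, f x ^ k ∂μ) / ∫ x, f x ^ k ∂μ ≤ a ^ k * μ.real ω / (b ^ k * c) :=
        div_le_div₀ (by positivity) (setIntegral_pow_le_pow_mul_measureReal hf0 ha k)
          (by positivity) (hlower k)
    _ = μ.real ω / c * (a / b) ^ k := by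
        rw [div_pow]; field_simp

lemma tendsto_mul_setIntegral_pow [IsFiniteMeasure μ] (hf0 : 0 ≤ f) (ha : ∀ x ∈ ω, f x ≤ a)
    {t : ℕ → ℝ} (ht0 : ∀ k, 0 ≤ t k) (ht : Tendsto (fun k ↦ t k * a ^ k) atTop (𝓝 0)) :
    Tendsto (fun k ↦ t k * ∫ x in ω, f x ^ k ∂μ) atTop (𝓝 0) := by
  refine squeeze_zero (fun k ↦ mul_nonneg (ht0 k) ?_) (fun k ↦ ?_)
    (by simpa using ht.mul_const (μ.real ω))
  · exact integral_nonneg fun x ↦ pow_nonneg (hf0 x) k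
  rw [mul_assoc]
  exact mul_le_mul_of_nonneg_left (setIntegral_pow_le_pow_mul_measureReal hf0 ha k) (ht0 k)

end PowerConcentration

lemma Real.Gamma_nat_add_le_factorial_mul_pow {k m : ℕ} {s : ℝ} (hk : 2 ≤ k) (hs : 0 ≤ s)
    (hsm : s ≤ m + 1) : Real.Gamma (k + s) ≤ k.factorial * (k + m : ℝ) ^ m := by
  have hk' : (2 : ℝ) ≤ k := by exact_mod_cast hk
  calc Real.Gamma (k + s) ≤ Real.Gamma ((k + m : ℕ) + 1) := by
        refine Real.Gamma_strictMonoOn_Ici.monotoneOn ?_ ?_ ?_ <;>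
          simp only [mem_Ici, Nat.cast_add] <;> linarith [(Nat.cast_nonneg m : (0 : ℝ) ≤ m)]
    _ = (k.factorial * (k + 1).ascFactorial m : ℕ) := by
        rw [Real.Gamma_nat_eq_factorial, Nat.factorial_mul_ascFactorial]
    _ ≤ (k.factorial * (k + m) ^ m : ℕ) := by
        gcongr; exact Nat.ascFactorial_le_pow_add k m
    _ = k.factorial * (k + m : ℝ) ^ m := by push_cast; rfl

theorem tendsto_Gamma_add_div_factorial_mul_pow {s a : ℝ} (hs : 0 ≤ s) (ha0 : 0 ≤ a)
    (ha1 : a < 1) :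
    Tendsto (fun k : ℕ ↦ Real.Gamma (k + s) / k.factorial * a ^ k) atTop (𝓝 0) := by
  obtain ⟨m, hm⟩ := exists_nat_ge s
  have hpoly :=
    (tendsto_pow_const_mul_const_pow_of_lt_one m ha0 ha1).const_mul (((m : ℝ) + 1) ^ m)
  rw [mul_zero] at hpoly
  refine squeeze_zero' (Eventually.of_forall fun k ↦ ?_) ?_ hpoly
  · have := Real.Gamma_nonneg_of_nonneg (by positivity : (0 : ℝ) ≤ k + s)
    positivity
  filter_upwards [eventually_ge_atTop 2] with k hk
  have hk' : (1 : ℝ) ≤ k := by exact_mod_cast (by omega : 1 ≤ k)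
  calc Real.Gamma (k + s) / k.factorial * a ^ k ≤ (k + m : ℝ) ^ m * a ^ k := by
        gcongr
        rw [div_le_iff₀ (by positivity), mul_comm]
        exact Real.Gamma_nat_add_le_factorial_mul_pow hk hs (by linarith)
    _ ≤ ((m + 1) * k : ℝ) ^ m * a ^ k := by gcongr; nlinarith
    _ = (m + 1) ^ m * ((k : ℝ) ^ m * a ^ k) := by rw [mul_pow]; ring

lemma EuclideanSpace.sq_add_sq_lt_one {ι : Type*} [Fintype ι] {x : EuclideanSpace ℝ ι}
    (hx : ‖x‖ = 1) {i i' j : ι} (hii' : i ≠ i') (hij : i ≠ j) (hi'j : i' ≠ j) (hj : x j ≠ 0) :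
    x i ^ 2 + x i' ^ 2 < 1 := by
  classical
  have hsum : x i ^ 2 + x i' ^ 2 + x j ^ 2 ≤ 1 :=
    calc x i ^ 2 + x i' ^ 2 + x j ^ 2 = ∑ l ∈ {i, i', j}, x l ^ 2 := by
          simp [hii', hij, hi'j, add_assoc]
      _ ≤ ∑ l, x l ^ 2 := Finset.sum_le_univ_sum_of_nonneg fun _ ↦ sq_nonneg _
      _ = 1 := by rw [← EuclideanSpace.real_norm_sq_eq, hx, one_pow]
  have := pow_pos (abs_pos.2 hj) 2
  rw [sq_abs] at this
  linarith

open Metric in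
lemma exists_lt_one_forall_sq_add_sq_le {d : ℕ}
    {ω : Set (sphere (0 : EuclideanSpace ℝ (Fin (d + 1))) 1)}
    (hdisj : closure ω ∩ {x : sphere (0 : EuclideanSpace ℝ (Fin (d + 1))) 1 |
      ∀ j : Fin (d + 1), 2 ≤ (j : ℕ) → (x : EuclideanSpace ℝ (Fin (d + 1))) j = 0} = ∅) :
    ∃ a, 0 ≤ a ∧ a < 1 ∧ ∀ x ∈ ω,
      (x : EuclideanSpace ℝ (Fin (d + 1))) 0 ^ 2
        + (x : EuclideanSpace ℝ (Fin (d + 1))) 1 ^ 2 ≤ a := by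
  have hlt : ∀ x ∈ closure ω,
      (x : EuclideanSpace ℝ (Fin (d + 1))) 0 ^ 2
        + (x : EuclideanSpace ℝ (Fin (d + 1))) 1 ^ 2 < 1 := by
    intro x hx
    obtain ⟨j, hj, hxj⟩ : ∃ j : Fin (d + 1), 2 ≤ (j : ℕ)
        ∧ (x : EuclideanSpace ℝ (Fin (d + 1))) j ≠ 0 := by
      by_contra! h
      exact eq_empty_iff_forall_notMem.1 hdisj x ⟨hx, h⟩
    have h0 : ((0 : Fin (d + 1)) : ℕ) = 0 := rfl
    have h1 : ((1 : Fin (d + 1)) : ℕ) = 1 := by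
      rw [Fin.val_one']; exact Nat.mod_eq_of_lt (by omega)
    exact EuclideanSpace.sq_add_sq_lt_one (norm_eq_of_mem_sphere x)
      (Fin.ne_of_val_ne (by omega)) (Fin.ne_of_val_ne (by omega)) (Fin.ne_of_val_ne (by omega))
      hxj
  obtain ⟨a, ha1, ha⟩ := isClosed_closure.isCompact.exists_forall_le' (α := ℝᵒᵈ)
    (by fun_prop) hlt
  exact ⟨max a 0, le_max_right _ _, max_lt ha1 one_pos,
    fun x hx ↦ le_max_of_le_left (ha x (subset_closure hx))⟩

lemma norm_ofReal_sqrt_mul_pow_sq {t : ℝ} (ht : 0 ≤ t) (u v : ℝ) (k : ℕ) :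
    ‖(Real.sqrt t : ℂ) * ((u : ℂ) + Complex.I * (v : ℂ)) ^ k‖ ^ 2 = t * (u ^ 2 + v ^ 2) ^ k := by
  rw [norm_mul, norm_pow, mul_pow, ← pow_mul, mul_comm k, pow_mul, Complex.sq_norm,
    Complex.sq_norm, mul_comm Complex.I, Complex.normSq_add_mul_I, Complex.normSq_ofReal,
    Real.mul_self_sqrt ht]

theorem stmt_4_general (d : ℕ)
    (ω : Set (Metric.sphere (0 : EuclideanSpace ℝ (Fin (d + 1))) 1))
    (hdisj : closure ω ∩
        {x : Metric.sphere (0 : EuclideanSpace ℝ (Fin (d + 1))) 1 |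
          ∀ j : Fin (d + 1), 2 ≤ (j : ℕ) → (x : EuclideanSpace ℝ (Fin (d + 1))) j = 0}
      = ∅) :
    Tendsto (fun k : ℕ =>
        (∫ x in ω,
            ((x : EuclideanSpace ℝ (Fin (d + 1))) 0 ^ 2
              + (x : EuclideanSpace ℝ (Fin (d + 1))) 1 ^ 2) ^ k
          ∂(volume : Measure (EuclideanSpace ℝ (Fin (d + 1)))).toSphere)
        / (∫ x : Metric.sphere (0 : EuclideanSpace ℝ (Fin (d + 1))) 1,
            ((x : EuclideanSpace ℝ (Fin (d + 1))) 0 ^ 2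
              + (x : EuclideanSpace ℝ (Fin (d + 1))) 1 ^ 2) ^ k
          ∂(volume : Measure (EuclideanSpace ℝ (Fin (d + 1)))).toSphere))
      atTop (nhds 0)
    ∧ Tendsto (fun k : ℕ =>
        ∫ x in ω,
          ‖(Real.sqrt (Real.Gamma ((k : ℝ) + ((d : ℝ) + 1) / 2)
                / (2 * Real.pi ^ (((d : ℝ) + 1) / 2) * (k.factorial : ℝ))) : ℂ)
              * (((x : EuclideanSpace ℝ (Fin (d + 1))) 0 : ℂ)
                  + Complex.I * ((x : EuclideanSpace ℝ (Fin (d + 1))) 1 : ℂ)) ^ k‖ ^ 2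
          ∂(volume : Measure (EuclideanSpace ℝ (Fin (d + 1)))).toSphere)
      atTop (nhds 0) := by
  set σ := (volume : Measure (EuclideanSpace ℝ (Fin (d + 1)))).toSphere
  set s : ℝ := ((d : ℝ) + 1) / 2
  obtain ⟨a, ha0, ha1, ha⟩ := exists_lt_one_forall_sq_add_sq_le hdisj
  have hf0 : 0 ≤ fun x : Metric.sphere (0 : EuclideanSpace ℝ (Fin (d + 1))) 1 ↦
      (x : EuclideanSpace ℝ (Fin (d + 1))) 0 ^ 2 + (x : EuclideanSpace ℝ (Fin (d + 1))) 1 ^ 2 :=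
    fun x ↦ by positivity
  have hpole :
      EuclideanSpace.single 0 1 ∈ Metric.sphere (0 : EuclideanSpace ℝ (Fin (d + 1))) 1 := by
    simp
  refine ⟨tendsto_setIntegral_pow_div_integral_pow (by fun_prop) hf0 ha0 ha
    (x₀ := ⟨_, hpole⟩) ?_, ?_⟩
  · have h0 : (EuclideanSpace.single 0 1 : EuclideanSpace ℝ (Fin (d + 1))) 0 = 1 := by simp
    have := sq_nonneg ((EuclideanSpace.single 0 1 : EuclideanSpace ℝ (Fin (d + 1))) 1)
    simp only [h0]
    linarith
  set c : ℕ → ℝ := fun k ↦ Real.Gamma (k + s) / (2 * Real.pi ^ s * k.factorial)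
  have hc0 : ∀ k, 0 ≤ c k := fun k ↦ by
    have := Real.Gamma_nonneg_of_nonneg (by positivity : (0 : ℝ) ≤ k + s)
    positivity
  have hc : Tendsto (fun k ↦ c k * a ^ k) atTop (𝓝 0) := by
    have := (tendsto_Gamma_add_div_factorial_mul_pow (s := s) (by positivity) ha0 ha1).div_const
      (2 * Real.pi ^ s)
    rw [zero_div] at this
    exact this.congr fun k ↦ by simp only [c]; ring
  refine (tendsto_mul_setIntegral_pow (μ := σ) hf0 ha hc0 hc).congr fun k ↦ ?_
  rw [← integral_const_mul]
  congr 1 with x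
  rw [norm_ofReal_sqrt_mul_pow_sq (hc0 k)]

/-- Let `d ≥ 2` and let `ω` be a measurable subset of the unit sphere
`S^d ⊆ ℝ^{d+1}` whose closure is disjoint from the equator
`{x ∈ S^d : x₃ = ⋯ = x_{d+1} = 0}`.  Then, with `σ` the canonical surface measure
(`volume.toSphere`), the ratio `(∫_ω (x₁²+x₂²)^k dσ) / (∫_{S^d} (x₁²+x₂²)^k dσ)` tends to `0`
as `k → ∞`; equivalently, for the `L²`-normalized spherical harmonics
`φ_k = c_k (x₁ + i x₂)^k`, `c_k = (Γ(k+(d+1)/2)/(2π^{(d+1)/2}k!))^{1/2}`, one has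
`∫_ω |φ_k|² dσ → 0`: the densities `|φ_k|²` concentrate on the equator. -/
theorem stmt_4 (d : ℕ) (hd : 2 ≤ d)
    (ω : Set (Metric.sphere (0 : EuclideanSpace ℝ (Fin (d + 1))) 1))
    (hω : MeasurableSet ω)
    (hdisj : closure ω ∩
        {x : Metric.sphere (0 : EuclideanSpace ℝ (Fin (d + 1))) 1 |
          ∀ j : Fin (d + 1), 2 ≤ (j : ℕ) → (x : EuclideanSpace ℝ (Fin (d + 1))) j = 0}
      = ∅) :
    Tendsto (fun k : ℕ =>
        (∫ x in ω,
            ((x : EuclideanSpace ℝ (Fin (d + 1))) 0 ^ 2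
              + (x : EuclideanSpace ℝ (Fin (d + 1))) 1 ^ 2) ^ k
          ∂(volume : Measure (EuclideanSpace ℝ (Fin (d + 1)))).toSphere)
        / (∫ x : Metric.sphere (0 : EuclideanSpace ℝ (Fin (d + 1))) 1,
            ((x : EuclideanSpace ℝ (Fin (d + 1))) 0 ^ 2
              + (x : EuclideanSpace ℝ (Fin (d + 1))) 1 ^ 2) ^ k
          ∂(volume : Measure (EuclideanSpace ℝ (Fin (d + 1)))).toSphere))
      atTop (nhds 0)
    ∧ Tendsto (fun k : ℕ =>
        ∫ x in ω,
          ‖(Real.sqrt (Real.Gamma ((k : ℝ) + ((d : ℝ) + 1) / 2)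
                / (2 * Real.pi ^ (((d : ℝ) + 1) / 2) * (k.factorial : ℝ))) : ℂ)
              * (((x : EuclideanSpace ℝ (Fin (d + 1))) 0 : ℂ)
                  + Complex.I * ((x : EuclideanSpace ℝ (Fin (d + 1))) 1 : ℂ)) ^ k‖ ^ 2
          ∂(volume : Measure (EuclideanSpace ℝ (Fin (d + 1)))).toSphere)
      atTop (nhds 0) :=
  stmt_4_general d ω hdisj
end

section
/- Let d ≥ 2, let P ⊆ ℝ^{d+1} be a two-dimensional linear subspace and γ = S^d ∩ P the corresponding great circle, and let ω ⊆ S^d be a measurable set whose closure is disjoint from γ. Then uniform observability of spherical harmonics from ω fails: for every constant C > 0 there exist a natural number k and a nonzero harmonic polynomial p ∈ ℂ[X₁, …, X_{d+1}], homogeneous of degree k, such that ∫_{S^d} |p(x)|² dσ(x) > C · ∫_ω |p(x)|² dσ(x). -/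
/-!
Let `e₀, e₁` be an orthonormal basis of `P` and `a = e₀ + i e₁ ∈ ℂ^{d+1}`. Since `a` is isotropic
(`∑ aⱼ² = 0`), the powers `(∑ aⱼ Xⱼ)^k` are harmonic, and on the sphere
`|(∑ aⱼ xⱼ)^k|² = ‖π_P x‖^{2k}`, where `π_P` is the orthogonal projection onto `P`. This function
equals `1` exactly on the great circle and is at most some `r < 1` on the compact set `closure ω`,
so as `k → ∞` its mass concentrates near the great circle, away from `ω`.
-/

open MeasureTheory MvPolynomial Filter Topology
open scoped RealInnerProductSpace

theorem exists_mul_pow_lt_mul_pow {r t B : ℝ} (hr : 0 ≤ r) (hrt : r < t) (hB : 0 < B) (c : ℝ) :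
    ∃ k : ℕ, c * r ^ k < B * t ^ k := by
  have ht : 0 < t := hr.trans_lt hrt
  have hlim : Tendsto (fun k : ℕ => c * (r / t) ^ k) atTop (𝓝 0) := by
    simpa using (tendsto_pow_atTop_nhds_zero_of_lt_one (div_nonneg hr ht.le)
      ((div_lt_one ht).2 hrt)).const_mul c
  obtain ⟨k, hk⟩ := (hlim.eventually (gt_mem_nhds hB)).exists
  refine ⟨k, ?_⟩
  calc c * r ^ k = c * (r / t) ^ k * t ^ k := by
        rw [div_pow, mul_assoc, div_mul_cancel₀ _ (by positivity)]
    _ < B * t ^ k := by gcongr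

section Concentration

variable {X : Type*} [TopologicalSpace X] [CompactSpace X] [MeasurableSpace X]
  [OpensMeasurableSpace X] {μ : Measure X} [IsFiniteMeasure μ] [μ.IsOpenPosMeasure] {f : X → ℝ}

theorem exists_mul_setIntegral_pow_lt_integral_pow (hf : Continuous f) (hf0 : 0 ≤ f) {s : Set X}
    {x₀ : X} (hs : ∀ x ∈ closure s, f x < f x₀) (C : ℝ) :
    ∃ k : ℕ, C * ∫ x in s, f x ^ k ∂μ < ∫ x, f x ^ k ∂μ := by
  have hint (k : ℕ) : Integrable (fun x => f x ^ k) μ :=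
    (hf.pow k).integrable_of_hasCompactSupport (HasCompactSupport.of_compactSpace _)
  rcases (closure s).eq_empty_or_nonempty with hempty | hne
  · refine ⟨0, ?_⟩
    rw [(closure_empty_iff s).mp hempty]
    simpa [measureReal_def, ENNReal.toReal_pos_iff] using isOpen_univ.measure_pos μ ⟨x₀, trivial⟩
  obtain ⟨x₁, hx₁, hmax⟩ := isClosed_closure.isCompact.exists_isMaxOn hne hf.continuousOn
  set r := f x₁
  set t := (r + f x₀) / 2
  have hr : 0 ≤ r := hf0 x₁
  have hrt : r < t := by have := hs x₁ hx₁; simp only [t]; linarith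
  have ht : t < f x₀ := by have := hs x₁ hx₁; simp only [t]; linarith
  set U := {x | t < f x}
  have hU : IsOpen U := isOpen_lt continuous_const hf
  have hμU : 0 < μ.real U :=
    ENNReal.toReal_pos (hU.measure_pos μ ⟨x₀, ht⟩).ne' (measure_ne_top _ _)
  obtain ⟨k, hk⟩ := exists_mul_pow_lt_mul_pow hr hrt hμU (|C| * μ.real (closure s))
  refine ⟨k, ?_⟩
  have hs_le : ∫ x in s, f x ^ k ∂μ ≤ ∫ x in closure s, f x ^ k ∂μ :=
    setIntegral_mono_set (hint k).integrableOn
      (Eventually.of_forall fun x => pow_nonneg (hf0 x) k) (Eventually.of_forall subset_closure)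
  have hclosure_le : ∫ x in closure s, f x ^ k ∂μ ≤ μ.real (closure s) * r ^ k := by
    rw [← smul_eq_mul, ← setIntegral_const]
    exact setIntegral_mono_on (hint k).integrableOn (integrableOn_const (measure_ne_top _ _))
      isClosed_closure.measurableSet fun x hx => pow_le_pow_left₀ (hf0 x) (hmax hx) k
  have hU_le : μ.real U * t ^ k ≤ ∫ x in U, f x ^ k ∂μ :=
    setIntegral_ge_of_const_le hU.measurableSet (measure_ne_top _ _)
      (fun x hx => pow_le_pow_left₀ (hr.trans hrt.le) (le_of_lt hx) k) (hint k).integrableOn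
  calc C * ∫ x in s, f x ^ k ∂μ ≤ |C| * ∫ x in closure s, f x ^ k ∂μ :=
        mul_le_mul (le_abs_self C) hs_le (integral_nonneg fun x => pow_nonneg (hf0 x) k)
          (abs_nonneg C)
    _ ≤ |C| * μ.real (closure s) * r ^ k := by rw [mul_assoc]; gcongr
    _ < μ.real U * t ^ k := hk
    _ ≤ ∫ x in U, f x ^ k ∂μ := hU_le
    _ ≤ ∫ x, f x ^ k ∂μ :=
        setIntegral_le_integral (hint k) (Eventually.of_forall fun x => pow_nonneg (hf0 x) k)

end Concentration

section LinearForm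

variable {σ R : Type*} [Fintype σ] [CommSemiring R]

noncomputable def linearForm (a : σ → R) : MvPolynomial σ R := ∑ j, C (a j) * X j

theorem isHomogeneous_linearForm (a : σ → R) : (linearForm a).IsHomogeneous 1 :=
  IsHomogeneous.sum _ _ _ fun j _ => isHomogeneous_C_mul_X (a j) j

variable [DecidableEq σ]

theorem pderiv_linearForm (a : σ → R) (i : σ) : pderiv i (linearForm a) = C (a i) := by
  simp [linearForm, map_sum, pderiv_X, Pi.single_apply]

theorem pderiv_pderiv_pow_linearForm (a : σ → R) (i : σ) (k : ℕ) :
    pderiv i (pderiv i (linearForm a ^ k)) =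
      ((k * (k - 1) : ℕ) : MvPolynomial σ R) * linearForm a ^ (k - 2) * C (a i ^ 2) := by
  rw [pderiv_pow, pderiv_linearForm, Derivation.leibniz, pderiv_C, smul_zero, zero_add,
    Derivation.leibniz, Derivation.map_natCast, smul_zero, add_zero, pderiv_pow,
    pderiv_linearForm, Nat.sub_sub]
  simp only [smul_eq_mul, map_pow, Nat.cast_mul]
  ring

theorem sum_pderiv_pderiv_pow_linearForm (a : σ → R) (k : ℕ) :
    ∑ i, pderiv i (pderiv i (linearForm a ^ k)) =
      ((k * (k - 1) : ℕ) : MvPolynomial σ R) * linearForm a ^ (k - 2) * C (∑ i, a i ^ 2) := by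
  simp only [pderiv_pderiv_pow_linearForm, map_sum, Finset.mul_sum]

end LinearForm

section OfRealAddMulI

variable {ι : Type*} [Fintype ι]

theorem sum_ofReal_add_mul_I_sq (v w : EuclideanSpace ℝ ι) :
    ∑ j, ((v j : ℂ) + w j * Complex.I) ^ 2 =
      ((‖v‖ ^ 2 - ‖w‖ ^ 2 : ℝ) : ℂ) + 2 * ⟪v, w⟫ * Complex.I := by
  simp only [EuclideanSpace.real_norm_sq_eq, PiLp.inner_apply]
  push_cast
  simp only [← Finset.sum_sub_distrib, Finset.mul_sum, Finset.sum_mul, ← Finset.sum_add_distrib]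
  refine Finset.sum_congr rfl fun j _ => ?_
  simp only [RCLike.inner_apply, Real.ringHom_apply, Complex.ofReal_mul]
  linear_combination (w j : ℂ) ^ 2 * Complex.I_sq

theorem eval_linearForm_ofReal_add_mul_I (v w x : EuclideanSpace ℝ ι) :
    eval (fun j => (x j : ℂ)) (linearForm fun j => (v j : ℂ) + w j * Complex.I) =
      ⟪v, x⟫ + ⟪w, x⟫ * Complex.I := by
  simp only [linearForm, map_sum, map_mul, eval_C, eval_X, PiLp.inner_apply]
  push_cast
  simp only [Finset.sum_mul, ← Finset.sum_add_distrib]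
  refine Finset.sum_congr rfl fun j _ => ?_
  simp only [RCLike.inner_apply, Real.ringHom_apply, Complex.ofReal_mul]
  ring

end OfRealAddMulI

section Projection

variable {E : Type*} [NormedAddCommGroup E] [InnerProductSpace ℝ E] {K : Submodule ℝ E}
  [K.HasOrthogonalProjection]

theorem OrthonormalBasis.sum_sq_inner_eq_norm_starProjection_sq {ι : Type*} [Fintype ι]
    (b : OrthonormalBasis ι ℝ K) (x : E) :
    ∑ i, ⟪(b i : E), x⟫ ^ 2 = ‖K.starProjection x‖ ^ 2 := by
  simp_rw [← Submodule.inner_orthogonalProjectionOnto_eq_of_mem_left, b.sum_sq_inner_right]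
  rfl

theorem Submodule.norm_starProjection_lt_of_notMem {x : E} (hx : x ∉ K) :
    ‖K.starProjection x‖ < ‖x‖ :=
  (K.norm_starProjection_apply_le x).lt_of_ne fun h => hx ((K.mem_iff_norm_starProjection x).2 h)

end Projection

section Plane

variable {ι : Type*} [Fintype ι] {P : Submodule ℝ (EuclideanSpace ℝ ι)}
  (b : OrthonormalBasis (Fin 2) ℝ P)

noncomputable def OrthonormalBasis.isotropicVector : ι → ℂ :=
  fun j => ((b 0 : EuclideanSpace ℝ ι) j : ℂ) + (b 1 : EuclideanSpace ℝ ι) j * Complex.I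

theorem OrthonormalBasis.sum_isotropicVector_sq : ∑ j, b.isotropicVector j ^ 2 = 0 := by
  have hnorm (i : Fin 2) : ‖(b i : EuclideanSpace ℝ ι)‖ = 1 := b.orthonormal.1 i
  have hinner : ⟪(b 0 : EuclideanSpace ℝ ι), b 1⟫ = 0 := b.orthonormal.2 (by decide)
  simp [isotropicVector, sum_ofReal_add_mul_I_sq, hnorm, hinner]

theorem OrthonormalBasis.norm_eval_linearForm_isotropicVector_sq (x : EuclideanSpace ℝ ι) :
    ‖eval (fun j => (x j : ℂ)) (linearForm b.isotropicVector)‖ ^ 2 = ‖P.starProjection x‖ ^ 2 := by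
  unfold isotropicVector
  rw [eval_linearForm_ofReal_add_mul_I, Complex.sq_norm, Complex.normSq_add_mul_I,
    ← b.sum_sq_inner_eq_norm_starProjection_sq, Fin.sum_univ_two]

end Plane

theorem stmt_5_general (d : ℕ)
    (P : Submodule ℝ (EuclideanSpace ℝ (Fin (d + 1)))) (hP : Module.finrank ℝ P = 2)
    (ω : Set (Metric.sphere (0 : EuclideanSpace ℝ (Fin (d + 1))) 1))
    (hdisj : closure ω ∩
        {x : Metric.sphere (0 : EuclideanSpace ℝ (Fin (d + 1))) 1 |
          (x : EuclideanSpace ℝ (Fin (d + 1))) ∈ P} = ∅) :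
    ∀ C : ℝ, 0 < C →
      ∃ (k : ℕ) (p : MvPolynomial (Fin (d + 1)) ℂ),
        p ≠ 0
        ∧ (∑ i : Fin (d + 1), pderiv i (pderiv i p) = 0)
        ∧ p.IsHomogeneous k
        ∧ (∫ x : Metric.sphere (0 : EuclideanSpace ℝ (Fin (d + 1))) 1,
              ‖eval (fun i : Fin (d + 1) =>
                  (((x : EuclideanSpace ℝ (Fin (d + 1))) i : ℝ) : ℂ)) p‖ ^ 2
              ∂(volume : Measure (EuclideanSpace ℝ (Fin (d + 1)))).toSphere)
          > C * ∫ x in ω,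
              ‖eval (fun i : Fin (d + 1) =>
                  (((x : EuclideanSpace ℝ (Fin (d + 1))) i : ℝ) : ℂ)) p‖ ^ 2
              ∂(volume : Measure (EuclideanSpace ℝ (Fin (d + 1)))).toSphere := by
  intro C _
  let b : OrthonormalBasis (Fin 2) ℝ P := (stdOrthonormalBasis ℝ P).reindex (finCongr hP)
  let f : Metric.sphere (0 : EuclideanSpace ℝ (Fin (d + 1))) 1 → ℝ :=
    fun x => ‖P.starProjection x‖ ^ 2
  have hf : Continuous f :=
    (continuous_norm.comp (P.starProjection.continuous.comp continuous_subtype_val)).pow 2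
  have hb₀ : ‖(b 0 : EuclideanSpace ℝ (Fin (d + 1)))‖ = 1 := b.orthonormal.1 0
  let x₀ : Metric.sphere (0 : EuclideanSpace ℝ (Fin (d + 1))) 1 := ⟨b 0, by simp [hb₀]⟩
  have hfx₀ : f x₀ = 1 := by simp [f, x₀, hb₀]
  have hlt (x) (hx : x ∈ closure ω) : f x < f x₀ := by
    have hxP : (x : EuclideanSpace ℝ (Fin (d + 1))) ∉ P := fun hxP =>
      Set.eq_empty_iff_forall_notMem.mp hdisj x ⟨hx, hxP⟩
    have h := P.norm_starProjection_lt_of_notMem hxP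
    rw [show ‖(x : EuclideanSpace ℝ (Fin (d + 1)))‖ = 1 by simp] at h
    rw [hfx₀]
    exact pow_lt_one₀ (norm_nonneg _) h two_ne_zero
  obtain ⟨k, hk⟩ := exists_mul_setIntegral_pow_lt_integral_pow
    (μ := (volume : Measure (EuclideanSpace ℝ (Fin (d + 1)))).toSphere) hf (fun x => sq_nonneg _)
    hlt C
  have hnorm (x : Metric.sphere (0 : EuclideanSpace ℝ (Fin (d + 1))) 1) :
      ‖eval (fun i => ((x : EuclideanSpace ℝ (Fin (d + 1))) i : ℂ))
        (linearForm b.isotropicVector ^ k)‖ ^ 2 = f x ^ k := by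
    rw [map_pow, norm_pow, ← pow_mul, mul_comm, pow_mul,
      b.norm_eval_linearForm_isotropicVector_sq]
  refine ⟨k, linearForm b.isotropicVector ^ k, fun h => ?_, ?_,
    by simpa using (isHomogeneous_linearForm _).pow k, by simpa only [hnorm] using hk⟩
  · simpa [h, hfx₀] using hnorm x₀
  · rw [sum_pderiv_pderiv_pow_linearForm, b.sum_isotropicVector_sq, map_zero, mul_zero]

/-- Let `d ≥ 2`, let `P ⊆ ℝ^{d+1}` be a two-dimensional linear subspace and
`γ = S^d ∩ P` the corresponding great circle, and let `ω ⊆ S^d` be a measurable set whose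
closure is disjoint from `γ`.  Then uniform observability of spherical harmonics from `ω`
fails: for every `C > 0` there exist `k ∈ ℕ` and a nonzero harmonic polynomial
`p ∈ ℂ[X₁,…,X_{d+1}]`, homogeneous of degree `k`, with
`∫_{S^d} |p(x)|² dσ(x) > C ∫_ω |p(x)|² dσ(x)`, `σ` being the canonical surface measure
`volume.toSphere`. -/
theorem stmt_5 (d : ℕ) (hd : 2 ≤ d)
    (P : Submodule ℝ (EuclideanSpace ℝ (Fin (d + 1)))) (hP : Module.finrank ℝ P = 2)
    (ω : Set (Metric.sphere (0 : EuclideanSpace ℝ (Fin (d + 1))) 1))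
    (hω : MeasurableSet ω)
    (hdisj : closure ω ∩
        {x : Metric.sphere (0 : EuclideanSpace ℝ (Fin (d + 1))) 1 |
          (x : EuclideanSpace ℝ (Fin (d + 1))) ∈ P} = ∅) :
    ∀ C : ℝ, 0 < C →
      ∃ (k : ℕ) (p : MvPolynomial (Fin (d + 1)) ℂ),
        p ≠ 0
        ∧ (∑ i : Fin (d + 1), pderiv i (pderiv i p) = 0)
        ∧ p.IsHomogeneous k
        ∧ (∫ x : Metric.sphere (0 : EuclideanSpace ℝ (Fin (d + 1))) 1,
              ‖eval (fun i : Fin (d + 1) =>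
                  (((x : EuclideanSpace ℝ (Fin (d + 1))) i : ℝ) : ℂ)) p‖ ^ 2
              ∂(volume : Measure (EuclideanSpace ℝ (Fin (d + 1)))).toSphere)
          > C * ∫ x in ω,
              ‖eval (fun i : Fin (d + 1) =>
                  (((x : EuclideanSpace ℝ (Fin (d + 1))) i : ℝ) : ℂ)) p‖ ^ 2
              ∂(volume : Measure (EuclideanSpace ℝ (Fin (d + 1)))).toSphere :=
  stmt_5_general d P hP ω hdisj
end

section
/- Let 0 < a < b < c and Q(x) = a x₁² + b x₂² + c x₃². For every E ∈ ℝ and every connected component C of the level set {x ∈ S² : Q(x) = E}, there exists a point x ∈ C with x₂ = 0 or x₃ = 0. (Thus the union of the two great circles S² ∩ {x₂ = 0} and S² ∩ {x₃ = 0} has nonempty intersection with every connected component of every level set of Q on S²; in particular it meets every orbit of the Hamiltonian flow of Q on S².) -/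
open Metric

noncomputable def sgn' (v : ℝ) : ℝ := if 0 ≤ v then 1 else -1

lemma sgn'_sq (v : ℝ) : (sgn' v)^2 = 1 := by
  unfold sgn'; split <;> norm_num

lemma sgn'_mul_sqrt (v : ℝ) : sgn' v * Real.sqrt (v^2) = v := by
  rw [Real.sqrt_sq_eq_abs]
  unfold sgn'
  split
  · rw [one_mul, abs_of_nonneg ‹_›]
  · rw [abs_of_neg (lt_of_not_ge ‹_›)]; ring

lemma key (α β γ E A B W : ℝ) (hαβ : α < β)
    (hsum : A^2 + B^2 + W^2 = 1) (hQ : α*A^2 + β*B^2 + γ*W^2 = E)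
    (hE1 : α ≤ E) (hE2 : E ≤ β) :
    ∃ f g : ℝ → ℝ, Continuous f ∧ Continuous g ∧ f 0 = A ∧ g 0 = B ∧
      ∀ t ∈ Set.Icc (0:ℝ) 1,
        (f t)^2 + (g t)^2 + ((1-t)*W)^2 = 1 ∧
        α*(f t)^2 + β*(g t)^2 + γ*((1-t)*W)^2 = E := by
  have hba : 0 < β - α := by linarith
  have hA2 : (β - α)*A^2 = β - E + (γ-β)*W^2 := by linear_combination β*hsum - hQ
  have hB2 : (β - α)*B^2 = E - α - (γ-α)*W^2 := by linear_combination hQ - α*hsum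
  refine ⟨fun t => sgn' A * Real.sqrt ((β - E + (γ-β)*((1-t)*W)^2)/(β-α)),
          fun t => sgn' B * Real.sqrt ((E - α - (γ-α)*((1-t)*W)^2)/(β-α)),
          by fun_prop, by fun_prop, ?_, ?_, ?_⟩
  · have e : (β - E + (γ-β)*((1-(0:ℝ))*W)^2)/(β-α) = A^2 := by
      field_simp
      linear_combination -hA2
    beta_reduce
    rw [e, sgn'_mul_sqrt]
  · have e : (E - α - (γ-α)*((1-(0:ℝ))*W)^2)/(β-α) = B^2 := by
      field_simp
      linear_combination -hB2
    beta_reduce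
    rw [e, sgn'_mul_sqrt]
  · intro t ht
    set s := ((1-t)*W)^2 with hs
    have hs0 : 0 ≤ s := sq_nonneg _
    have hsW : s ≤ W^2 := by
      rw [hs, mul_pow]
      have h1t : (0:ℝ) ≤ 1 - (1-t)^2 := by nlinarith [ht.1, ht.2]
      nlinarith [mul_nonneg h1t (sq_nonneg W)]
    have h1 : 0 ≤ β - E + (γ-β)*s := by
      rcases le_total β γ with h | h
      · nlinarith
      · nlinarith [sq_nonneg A]
    have h2 : 0 ≤ E - α - (γ-α)*s := by
      rcases le_total γ α with h | h
      · nlinarith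
      · nlinarith [sq_nonneg B]
    have ef : (sgn' A * Real.sqrt ((β - E + (γ-β)*s)/(β-α)))^2
        = (β - E + (γ-β)*s)/(β-α) := by
      rw [mul_pow, sgn'_sq, one_mul, Real.sq_sqrt (div_nonneg h1 hba.le)]
    have eg : (sgn' B * Real.sqrt ((E - α - (γ-α)*s)/(β-α)))^2
        = (E - α - (γ-α)*s)/(β-α) := by
      rw [mul_pow, sgn'_sq, one_mul, Real.sq_sqrt (div_nonneg h2 hba.le)]
    constructor
    · rw [ef, eg]; field_simp; ring
    · rw [ef, eg]; field_simp; ring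

lemma sphere_iff (x : EuclideanSpace ℝ (Fin 3)) :
    x ∈ sphere (0:EuclideanSpace ℝ (Fin 3)) 1 ↔ x 0^2 + x 1^2 + x 2^2 = 1 := by
  rw [mem_sphere_zero_iff_norm, EuclideanSpace.norm_eq, Fin.sum_univ_three]
  simp only [Real.norm_eq_abs, sq_abs]
  exact Real.sqrt_eq_one

lemma comp_aux {X : Type*} [TopologicalSpace X] {P : X → Prop} (γ : ℝ → X)
    (hc : Continuous γ) (hP : ∀ t ∈ Set.Icc (0:ℝ) 1, P (γ t)) (z : {x // P x})
    (h0 : γ 0 = z.1) :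
    ∃ y : {x // P x}, y ∈ connectedComponent z ∧ y.1 = γ 1 := by
  have h1 : P (γ 1) := hP 1 ⟨zero_le_one, le_rfl⟩
  refine ⟨⟨γ 1, h1⟩, ?_, rfl⟩
  have hJ : Joined z ⟨γ 1, h1⟩ := by
    refine ⟨{ toFun := fun t => ⟨γ t.1, hP t.1 t.2⟩
              continuous_toFun := (hc.comp continuous_subtype_val).subtype_mk _
              source' := Subtype.ext h0
              target' := rfl }⟩
  exact pathComponent_subset_component z hJ

/-- Let `0 < a < b < c` and `Q(x) = a x₁² + b x₂² + c x₃²`.  For every `E ∈ ℝ`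
and every connected component `C` of the level set `{x ∈ S² : Q(x) = E}` (with its subspace
topology), there exists a point `x ∈ C` with `x₂ = 0` or `x₃ = 0`.  (Thus the union of the two
great circles `S² ∩ {x₂ = 0}` and `S² ∩ {x₃ = 0}` has nonempty intersection with every
connected component of every level set of `Q` on `S²`; in particular it meets every orbit of
the Hamiltonian flow of `Q` on `S²`.)  Connected components are represented as
`connectedComponent z` for points `z` of the level set, viewed as a subtype. -/
theorem stmt_10 (a b c : ℝ) (ha : 0 < a) (hab : a < b) (hbc : b < c) (E : ℝ)
    (z : {x : EuclideanSpace ℝ (Fin 3) //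
        x ∈ sphere (0 : EuclideanSpace ℝ (Fin 3)) 1
          ∧ a * x 0 ^ 2 + b * x 1 ^ 2 + c * x 2 ^ 2 = E}) :
    ∃ y ∈ connectedComponent z,
      (y : EuclideanSpace ℝ (Fin 3)) 1 = 0 ∨ (y : EuclideanSpace ℝ (Fin 3)) 2 = 0 := by
  obtain ⟨hsph, hQz⟩ := z.2
  have hsum : z.1 0^2 + z.1 1^2 + z.1 2^2 = 1 := (sphere_iff z.1).1 hsph
  have hE1 : a ≤ E := by nlinarith [sq_nonneg (z.1 0), sq_nonneg (z.1 1), sq_nonneg (z.1 2)]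
  have hEc : E ≤ c := by nlinarith [sq_nonneg (z.1 0), sq_nonneg (z.1 1), sq_nonneg (z.1 2)]
  rcases le_total E b with hEb | hbE
  · -- shrink the third coordinate to 0
    obtain ⟨f, g, hf, hg, hf0, hg0, hprop⟩ :=
      key a b c E (z.1 0) (z.1 1) (z.1 2) hab hsum (by linear_combination hQz) hE1 hEb
    set γ : ℝ → EuclideanSpace ℝ (Fin 3) :=
      fun t => (WithLp.equiv 2 (Fin 3 → ℝ)).symm ![f t, g t, (1-t) * z.1 2] with hγ
    have hγi : ∀ t, γ t 0 = f t ∧ γ t 1 = g t ∧ γ t 2 = (1-t) * z.1 2 := by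
      intro t; exact ⟨rfl, rfl, rfl⟩
    have hcont : Continuous γ := by
      apply Continuous.comp (PiLp.continuous_toLp 2 (fun _ : Fin 3 => ℝ))
      refine continuous_pi ?_
      intro i
      fin_cases i <;> simp <;> fun_prop
    have hmem : ∀ t ∈ Set.Icc (0:ℝ) 1,
        γ t ∈ sphere (0 : EuclideanSpace ℝ (Fin 3)) 1
          ∧ a * γ t 0 ^ 2 + b * γ t 1 ^ 2 + c * γ t 2 ^ 2 = E := by
      intro t ht
      obtain ⟨h1, h2⟩ := hprop t ht
      obtain ⟨e0, e1, e2⟩ := hγi t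
      constructor
      · rw [sphere_iff, e0, e1, e2]; exact h1
      · rw [e0, e1, e2]; linear_combination h2
    have h0 : γ 0 = z.1 := by
      ext i
      fin_cases i <;> simp [hγ]
      · exact hf0
      · exact hg0
    obtain ⟨y, hy, hy1⟩ := comp_aux γ hcont hmem z h0
    refine ⟨y, hy, Or.inr ?_⟩
    rw [hy1]
    show (1-(1:ℝ)) * z.1 2 = 0
    ring
  · -- shrink the second coordinate to 0
    obtain ⟨f, g, hf, hg, hf0, hg0, hprop⟩ :=
      key a c b E (z.1 0) (z.1 2) (z.1 1) (lt_trans hab hbc)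
        (by linear_combination hsum) (by linear_combination hQz) hE1 hEc
    set γ : ℝ → EuclideanSpace ℝ (Fin 3) :=
      fun t => (WithLp.equiv 2 (Fin 3 → ℝ)).symm ![f t, (1-t) * z.1 1, g t] with hγ
    have hγi : ∀ t, γ t 0 = f t ∧ γ t 1 = (1-t) * z.1 1 ∧ γ t 2 = g t := by
      intro t; exact ⟨rfl, rfl, rfl⟩
    have hcont : Continuous γ := by
      apply Continuous.comp (PiLp.continuous_toLp 2 (fun _ : Fin 3 => ℝ))
      refine continuous_pi ?_
      intro i
      fin_cases i <;> simp <;> fun_prop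
    have hmem : ∀ t ∈ Set.Icc (0:ℝ) 1,
        γ t ∈ sphere (0 : EuclideanSpace ℝ (Fin 3)) 1
          ∧ a * γ t 0 ^ 2 + b * γ t 1 ^ 2 + c * γ t 2 ^ 2 = E := by
      intro t ht
      obtain ⟨h1, h2⟩ := hprop t ht
      obtain ⟨e0, e1, e2⟩ := hγi t
      constructor
      · rw [sphere_iff, e0, e1, e2]; linear_combination h1
      · rw [e0, e1, e2]; linear_combination h2
    have h0 : γ 0 = z.1 := by
      ext i
      fin_cases i <;> simp [hγ]
      · exact hf0
      · exact hg0
    obtain ⟨y, hy, hy1⟩ := comp_aux γ hcont hmem z h0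
    refine ⟨y, hy, Or.inl ?_⟩
    rw [hy1]
    show (1-(1:ℝ)) * z.1 1 = 0
    ring
end

section
/- Let 0 < a < b < c and Q(x) = a x₁² + b x₂² + c x₃². Then the level set {x ∈ S² : Q(x) = b} equals the union of the two great circles S² ∩ {x : √(b-a)·x₁ = √(c-b)·x₃} and S² ∩ {x : √(b-a)·x₁ = −√(c-b)·x₃}; this level set contains the two points (0, ±1, 0) and is path-connected. -/
open Metric Set

/-! On the unit sphere `Q(x) - b = (c - b) x₃² - (b - a) x₁²`, a difference of two squares, so the
level set is cut out by two planes through the origin. Each plane meets the sphere in the unit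
sphere of a two-dimensional subspace, which is path-connected, and both circles pass through
`(0, ±1, 0)`. -/

theorem Submodule.isPathConnected_sphere_inter {E : Type*} [NormedAddCommGroup E]
    [NormedSpace ℝ E] (P : Submodule ℝ E) (hP : 1 < Module.rank ℝ P) {r : ℝ} (hr : 0 ≤ r) :
    IsPathConnected (sphere (0 : E) r ∩ P) := by
  have hsphere : sphere (0 : E) r ∩ P = Subtype.val '' sphere (0 : P) r := by
    ext x
    simp [and_comm]
  rw [hsphere]
  exact (isPathConnected_sphere hP 0 hr).image continuous_subtype_val

theorem LinearMap.isPathConnected_sphere_inter_ker {E : Type*} [NormedAddCommGroup E]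
    [NormedSpace ℝ E] [FiniteDimensional ℝ E] (hE : 2 < Module.finrank ℝ E) (f : E →ₗ[ℝ] ℝ)
    {r : ℝ} (hr : 0 ≤ r) : IsPathConnected (sphere (0 : E) r ∩ ker f) := by
  refine (ker f).isPathConnected_sphere_inter (Module.one_lt_rank_of_one_lt_finrank ?_) hr
  have hrange : Module.finrank ℝ (range f) ≤ 1 := by
    simpa using Submodule.finrank_le (range f)
  have := f.finrank_range_add_finrank_ker
  omega

theorem EuclideanSpace.mem_sphere_zero_one_iff_fin_three (x : EuclideanSpace ℝ (Fin 3)) :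
    x ∈ sphere (0 : EuclideanSpace ℝ (Fin 3)) 1 ↔ x 0 ^ 2 + x 1 ^ 2 + x 2 ^ 2 = 1 := by
  rw [mem_sphere_zero_iff_norm, ← pow_eq_one_iff_of_nonneg (norm_nonneg x) two_ne_zero,
    EuclideanSpace.real_norm_sq_eq, Fin.sum_univ_three]

theorem isPathConnected_sphere_inter_setOf_mul_eq_mul (p q : ℝ) :
    IsPathConnected (sphere (0 : EuclideanSpace ℝ (Fin 3)) 1 ∩ {x | p * x 0 = q * x 2}) := by
  let f : EuclideanSpace ℝ (Fin 3) →ₗ[ℝ] ℝ :=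
    p • (EuclideanSpace.proj 0 : EuclideanSpace ℝ (Fin 3) →L[ℝ] ℝ).toLinearMap
      - q • (EuclideanSpace.proj 2 : EuclideanSpace ℝ (Fin 3) →L[ℝ] ℝ).toLinearMap
  have hf : {x : EuclideanSpace ℝ (Fin 3) | p * x 0 = q * x 2} = LinearMap.ker f := by
    ext x
    simp [f, sub_eq_zero]
  rw [hf]
  exact f.isPathConnected_sphere_inter_ker (by simp) zero_le_one

theorem weighted_sum_sq_eq_middle_iff {a b c x y z : ℝ} (hab : a ≤ b) (hbc : b ≤ c)
    (hxyz : x ^ 2 + y ^ 2 + z ^ 2 = 1) :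
    a * x ^ 2 + b * y ^ 2 + c * z ^ 2 = b ↔
      √(b - a) * x = √(c - b) * z ∨ √(b - a) * x = -(√(c - b) * z) := by
  rw [← sq_eq_sq_iff_eq_or_eq_neg, mul_pow, mul_pow, Real.sq_sqrt (sub_nonneg.2 hab),
    Real.sq_sqrt (sub_nonneg.2 hbc)]
  constructor <;> intro h <;> linear_combination b * hxyz - h

theorem stmt_12_general (a b c : ℝ) (hab : a < b) (hbc : b < c) :
    ({x : EuclideanSpace ℝ (Fin 3) |
        x ∈ sphere (0 : EuclideanSpace ℝ (Fin 3)) 1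
          ∧ a * x 0 ^ 2 + b * x 1 ^ 2 + c * x 2 ^ 2 = b}
      = (sphere (0 : EuclideanSpace ℝ (Fin 3)) 1
            ∩ {x : EuclideanSpace ℝ (Fin 3) |
                Real.sqrt (b - a) * x 0 = Real.sqrt (c - b) * x 2})
        ∪ (sphere (0 : EuclideanSpace ℝ (Fin 3)) 1
            ∩ {x : EuclideanSpace ℝ (Fin 3) |
                Real.sqrt (b - a) * x 0 = -(Real.sqrt (c - b) * x 2)}))
    ∧ EuclideanSpace.single (1 : Fin 3) (1 : ℝ) ∈
        {x : EuclideanSpace ℝ (Fin 3) |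
          x ∈ sphere (0 : EuclideanSpace ℝ (Fin 3)) 1
            ∧ a * x 0 ^ 2 + b * x 1 ^ 2 + c * x 2 ^ 2 = b}
    ∧ -EuclideanSpace.single (1 : Fin 3) (1 : ℝ) ∈
        {x : EuclideanSpace ℝ (Fin 3) |
          x ∈ sphere (0 : EuclideanSpace ℝ (Fin 3)) 1
            ∧ a * x 0 ^ 2 + b * x 1 ^ 2 + c * x 2 ^ 2 = b}
    ∧ IsPathConnected {x : EuclideanSpace ℝ (Fin 3) |
        x ∈ sphere (0 : EuclideanSpace ℝ (Fin 3)) 1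
          ∧ a * x 0 ^ 2 + b * x 1 ^ 2 + c * x 2 ^ 2 = b} := by
  have hunion : {x : EuclideanSpace ℝ (Fin 3) | x ∈ sphere 0 1
        ∧ a * x 0 ^ 2 + b * x 1 ^ 2 + c * x 2 ^ 2 = b}
      = (sphere 0 1 ∩ {x | √(b - a) * x 0 = √(c - b) * x 2})
        ∪ (sphere 0 1 ∩ {x | √(b - a) * x 0 = -(√(c - b) * x 2)}) := by
    ext x
    simp only [mem_ofPred_eq, mem_union, mem_inter_iff, ← and_or_left]
    exact and_congr_right fun hx ↦
      weighted_sum_sq_eq_middle_iff hab.le hbc.le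
        ((EuclideanSpace.mem_sphere_zero_one_iff_fin_three x).1 hx)
  have hpole : ∀ s : ℝ, |s| = 1 → EuclideanSpace.single (1 : Fin 3) s ∈
      (sphere 0 1 ∩ {x | √(b - a) * x 0 = √(c - b) * x 2})
        ∩ (sphere 0 1 ∩ {x | √(b - a) * x 0 = -(√(c - b) * x 2)}) := by
    intro s hs
    simp [hs]
  refine ⟨hunion, ?_, ?_, ?_⟩
  · rw [hunion]
    exact Or.inl (hpole 1 abs_one).1
  · rw [hunion, ← PiLp.single_neg]
    exact Or.inl (hpole (-1) (by norm_num)).1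
  · rw [hunion]
    refine (isPathConnected_sphere_inter_setOf_mul_eq_mul _ _).union ?_ ⟨_, hpole 1 abs_one⟩
    simp only [← neg_mul]
    exact isPathConnected_sphere_inter_setOf_mul_eq_mul _ _

/-- Let `0 < a < b < c` and `Q(x) = a x₁² + b x₂² + c x₃²`.  Then the level set
`{x ∈ S² : Q(x) = b}` equals the union of the two great circles
`S² ∩ {x : √(b-a)·x₁ = √(c-b)·x₃}` and `S² ∩ {x : √(b-a)·x₁ = −√(c-b)·x₃}`; this level set
contains the two points `(0, ±1, 0)` and is path-connected. -/
theorem stmt_12 (a b c : ℝ) (ha : 0 < a) (hab : a < b) (hbc : b < c) :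
    ({x : EuclideanSpace ℝ (Fin 3) |
        x ∈ sphere (0 : EuclideanSpace ℝ (Fin 3)) 1
          ∧ a * x 0 ^ 2 + b * x 1 ^ 2 + c * x 2 ^ 2 = b}
      = (sphere (0 : EuclideanSpace ℝ (Fin 3)) 1
            ∩ {x : EuclideanSpace ℝ (Fin 3) |
                Real.sqrt (b - a) * x 0 = Real.sqrt (c - b) * x 2})
        ∪ (sphere (0 : EuclideanSpace ℝ (Fin 3)) 1
            ∩ {x : EuclideanSpace ℝ (Fin 3) |
                Real.sqrt (b - a) * x 0 = -(Real.sqrt (c - b) * x 2)}))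
    ∧ EuclideanSpace.single (1 : Fin 3) (1 : ℝ) ∈
        {x : EuclideanSpace ℝ (Fin 3) |
          x ∈ sphere (0 : EuclideanSpace ℝ (Fin 3)) 1
            ∧ a * x 0 ^ 2 + b * x 1 ^ 2 + c * x 2 ^ 2 = b}
    ∧ -EuclideanSpace.single (1 : Fin 3) (1 : ℝ) ∈
        {x : EuclideanSpace ℝ (Fin 3) |
          x ∈ sphere (0 : EuclideanSpace ℝ (Fin 3)) 1
            ∧ a * x 0 ^ 2 + b * x 1 ^ 2 + c * x 2 ^ 2 = b}
    ∧ IsPathConnected {x : EuclideanSpace ℝ (Fin 3) |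
        x ∈ sphere (0 : EuclideanSpace ℝ (Fin 3)) 1
          ∧ a * x 0 ^ 2 + b * x 1 ^ 2 + c * x 2 ^ 2 = b} :=
  stmt_12_general a b c hab hbc
end
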